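/- Let f_t be the forward Loewner flow df_t = (2/f_t)dt − √κ dB_t, let G(y,z) = log|y−z̄| − log|y−z| be the zero-boundary Green's function on ℍ, and set G_t(y,z) = G(f_t(y), f_t(z)). Then for distinct y,z ∈ ℍ, before either is swallowed, dG_t(y,z) = −Im(2/f_t(y))·Im(2/f_t(z)) dt; in particular G_t(y,z) is nonincreasing in t. -/

import Mathlib

open MeasureTheory Set intervalIntegral

private lemma conj_intervalIntegral (g : ℝ → ℂ) (a b : ℝ) :
    (starRingEnd ℂ) (∫ s in a..b, g s) = ∫ s in a..b, (starRingEnd ℂ) (g s) := by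
  rw [intervalIntegral_eq_integral_uIoc, intervalIntegral_eq_integral_uIoc, integral_conj]
  split_ifs <;> simp

private lemma logabs_hasDeriv {u : ℝ → ℂ} {u' : ℂ} {s : Set ℝ} {t : ℝ}
    (hu : HasDerivWithinAt u u' s t) (h0 : u t ≠ 0) :
    HasDerivWithinAt (fun x => Real.log ‖u x‖) ((u' / u t).re) s t := by
  have hre : HasDerivWithinAt (fun x => (u x).re) u'.re s t :=
    Complex.reCLM.hasFDerivAt.comp_hasDerivWithinAt t hu
  have him : HasDerivWithinAt (fun x => (u x).im) u'.im s t :=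
    Complex.imCLM.hasFDerivAt.comp_hasDerivWithinAt t hu
  have hpos : (0:ℝ) < (u t).re ^ 2 + (u t).im ^ 2 := by
    have := Complex.normSq_pos.mpr h0
    simpa [Complex.normSq_apply, sq] using this
  have h := ((((hre.pow 2).add (him.pow 2)).log hpos.ne').div_const 2)
  have heq : ∀ x, Real.log ‖u x‖
      = Real.log ((u x).re ^ 2 + (u x).im ^ 2) / 2 := by
    intro x
    rw [Complex.norm_def, Real.log_sqrt (Complex.normSq_nonneg _), Complex.normSq_apply]
    ring_nf
  have h2 := h.congr (fun x _ => heq x) (heq t)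
  convert h2 using 1
  · rfl
  · rfl
  rw [Complex.div_re, Complex.normSq_apply]
  simp only [← pow_two]
  simp only [Pi.add_apply, Pi.pow_apply]
  field_simp
  ring

private lemma green_key {a b : ℂ} (ha : a ≠ 0) (hb : b ≠ 0) (hab : a ≠ b)
    (hab' : a - (starRingEnd ℂ) b ≠ 0) :
    ((2 / a - (starRingEnd ℂ) (2 / b)) / (a - (starRingEnd ℂ) b)).re
      - ((2 / a - 2 / b) / (a - b)).re = -((2 / a).im * (2 / b).im) := by
  have hb' : (starRingEnd ℂ) b ≠ 0 := by simpa using hb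
  have hab2 : a - b ≠ 0 := sub_ne_zero.mpr hab
  have h1 : (2 / a - (starRingEnd ℂ) (2 / b)) / (a - (starRingEnd ℂ) b)
      = -((2 / a) * (starRingEnd ℂ) (2 / b)) / 2 := by
    rw [map_div₀]
    simp only [map_ofNat]
    field_simp
    ring
  have h2 : (2 / a - 2 / b) / (a - b) = -((2 / a) * (2 / b)) / 2 := by
    field_simp
    ring
  rw [h1, h2]
  generalize (2 / a) = p
  generalize (2 / b) = q
  simp [Complex.div_re, Complex.mul_re, Complex.mul_im, Complex.normSq_apply]
  ring



/-- **Pathwise decrease of the zero-boundary Green's function under the forward flow.**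
Let `f_t = g_t − √κ B_t` solve (pathwise, for a continuous driving path `√κ B`) the
forward Loewner equation `df_t = (2/f_t) dt − √κ dB_t`, let
`G(y,z) = log|y−z̄| − log|y−z|` be the zero-boundary Green's function on `ℍ`, and set
`G_t(y,z) = G(f_t(y), f_t(z))` for distinct `y, z ∈ ℍ`.  Then, up to any time `T`
before either point is swallowed,
`dG_t(y,z) = −Im(2/f_t(y))·Im(2/f_t(z)) dt`; in particular `G_t(y,z)` is nonincreasing
on `[0,T]`. -/
theorem forward_loewner_green_function_derivative
    (κ : ℝ) (hκ : 0 < κ) (B : ℝ → ℝ) (hB : Continuous B) (hB0 : B 0 = 0)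
    (y z : ℂ) (hy : 0 < y.im) (hz : 0 < z.im) (hyz : y ≠ z)
    (T : ℝ) (hT : 0 < T)
    (f : ℝ → ℂ → ℂ)
    (hflow : ∀ t ∈ Set.Icc (0:ℝ) T, ∀ w : ℂ,
      f t w = w + (∫ s in (0:ℝ)..t, 2 / f s w) - ((Real.sqrt κ * B t : ℝ) : ℂ))
    (hcont : ∀ w : ℂ, ContinuousOn (fun s => f s w) (Set.Icc 0 T))
    -- neither `y` nor `z` is swallowed before time `T`:
    (him : ∀ s ∈ Set.Icc (0:ℝ) T, 0 < (f s y).im ∧ 0 < (f s z).im)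
    (hne : ∀ s ∈ Set.Icc (0:ℝ) T, f s y ≠ f s z) :
    let G : ℂ → ℂ → ℝ := fun a b =>
      Real.log ‖a - (starRingEnd ℂ) b‖ - Real.log ‖a - b‖
    (∀ t ∈ Set.Icc (0:ℝ) T,
      HasDerivWithinAt (fun s => G (f s y) (f s z))
        (-((2 / f t y).im * (2 / f t z).im)) (Set.Icc 0 T) t) ∧
    AntitoneOn (fun s => G (f s y) (f s z)) (Set.Icc 0 T) := by
  intro G
  have hay : ∀ s ∈ Set.Icc (0:ℝ) T, f s y ≠ 0 := by
    intro s hs h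
    have := (him s hs).1
    rw [h] at this; simp at this
  have haz : ∀ s ∈ Set.Icc (0:ℝ) T, f s z ≠ 0 := by
    intro s hs h
    have := (him s hs).2
    rw [h] at this; simp at this
  have hcy : ContinuousOn (fun s => 2 / f s y) (Set.Icc 0 T) :=
    continuousOn_const.div (hcont y) hay
  have hcz : ContinuousOn (fun s => 2 / f s z) (Set.Icc 0 T) :=
    continuousOn_const.div (hcont z) haz
  have hcv : ContinuousOn (fun s => 2 / f s y - 2 / f s z) (Set.Icc 0 T) := hcy.sub hcz
  have hcu : ContinuousOn (fun s => 2 / f s y - (starRingEnd ℂ) (2 / f s z)) (Set.Icc 0 T) :=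
    hcy.sub (Complex.continuous_conj.comp_continuousOn hcz)
  have hsub : ∀ t ∈ Set.Icc (0:ℝ) T, Set.uIcc (0:ℝ) t ⊆ Set.Icc 0 T := by
    intro t ht
    rw [Set.uIcc_of_le ht.1]
    exact Set.Icc_subset_Icc le_rfl ht.2
  have hIy : ∀ t ∈ Set.Icc (0:ℝ) T, IntervalIntegrable (fun s => 2 / f s y) volume 0 t :=
    fun t ht => (hcy.mono (hsub t ht)).intervalIntegrable
  have hIz : ∀ t ∈ Set.Icc (0:ℝ) T, IntervalIntegrable (fun s => 2 / f s z) volume 0 t :=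
    fun t ht => (hcz.mono (hsub t ht)).intervalIntegrable
  have hIcz : ∀ t ∈ Set.Icc (0:ℝ) T,
      IntervalIntegrable (fun s => (starRingEnd ℂ) (2 / f s z)) volume 0 t :=
    fun t ht => (((Complex.continuous_conj.comp_continuousOn hcz)).mono
      (hsub t ht)).intervalIntegrable
  have hv : ∀ t ∈ Set.Icc (0:ℝ) T, f t y - f t z
      = (y - z) + ∫ s in (0:ℝ)..t, (2 / f s y - 2 / f s z) := by
    intro t ht
    rw [intervalIntegral.integral_sub (hIy t ht) (hIz t ht), hflow t ht y, hflow t ht z]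
    ring
  have hu : ∀ t ∈ Set.Icc (0:ℝ) T, f t y - (starRingEnd ℂ) (f t z)
      = (y - (starRingEnd ℂ) z)
        + ∫ s in (0:ℝ)..t, (2 / f s y - (starRingEnd ℂ) (2 / f s z)) := by
    intro t ht
    rw [intervalIntegral.integral_sub (hIy t ht) (hIcz t ht), ← conj_intervalIntegral,
      hflow t ht y, hflow t ht z]
    simp only [map_sub, map_add, Complex.conj_ofReal]
    ring
  have hne' : ∀ t ∈ Set.Icc (0:ℝ) T, f t y - (starRingEnd ℂ) (f t z) ≠ 0 := by
    intro t ht h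
    have h1 := (him t ht).1
    have h2 := (him t ht).2
    have : (f t y - (starRingEnd ℂ) (f t z)).im = (f t y).im + (f t z).im := by
      simp [Complex.sub_im, Complex.conj_im]
    rw [h] at this
    simp at this
    linarith
  have hderiv : ∀ t ∈ Set.Icc (0:ℝ) T,
      HasDerivWithinAt (fun s => G (f s y) (f s z))
        (-((2 / f t y).im * (2 / f t z).im)) (Set.Icc 0 T) t := by
    intro t ht
    haveI : Fact (t ∈ Set.Icc (0:ℝ) T) := ⟨ht⟩
    have hvd : HasDerivWithinAt (fun s => f s y - f s z)
        (2 / f t y - 2 / f t z) (Set.Icc 0 T) t := by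
      have h0 : HasDerivWithinAt (fun r => ∫ s in (0:ℝ)..r, (2 / f s y - 2 / f s z))
          (2 / f t y - 2 / f t z) (Set.Icc 0 T) t :=
        intervalIntegral.integral_hasDerivWithinAt_right
          ((hcv.mono (hsub t ht)).intervalIntegrable)
          (hcv.stronglyMeasurableAtFilter_nhdsWithin measurableSet_Icc t)
          (hcv t ht)
      exact (h0.const_add (y - z)).congr (fun s hs => hv s hs) (hv t ht)
    have hud : HasDerivWithinAt (fun s => f s y - (starRingEnd ℂ) (f s z))
        (2 / f t y - (starRingEnd ℂ) (2 / f t z)) (Set.Icc 0 T) t := by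
      have h0 : HasDerivWithinAt
          (fun r => ∫ s in (0:ℝ)..r, (2 / f s y - (starRingEnd ℂ) (2 / f s z)))
          (2 / f t y - (starRingEnd ℂ) (2 / f t z)) (Set.Icc 0 T) t :=
        intervalIntegral.integral_hasDerivWithinAt_right
          ((hcu.mono (hsub t ht)).intervalIntegrable)
          (hcu.stronglyMeasurableAtFilter_nhdsWithin measurableSet_Icc t)
          (hcu t ht)
      exact (h0.const_add (y - (starRingEnd ℂ) z)).congr (fun s hs => hu s hs) (hu t ht)
    have h1 := logabs_hasDeriv hud (hne' t ht)
    have h2 := logabs_hasDeriv hvd (sub_ne_zero.mpr (hne t ht))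
    have h3 := h1.sub h2
    rw [green_key (hay t ht) (haz t ht) (hne t ht) (hne' t ht)] at h3
    exact h3
  refine ⟨hderiv, ?_⟩
  have hcontG : ContinuousOn (fun s => G (f s y) (f s z)) (Set.Icc 0 T) :=
    fun t ht => (hderiv t ht).continuousWithinAt
  have hDA : ∀ x ∈ interior (Set.Icc (0:ℝ) T), HasDerivAt (fun s => G (f s y) (f s z))
      (-((2 / f x y).im * (2 / f x z).im)) x := by
    intro x hx
    rw [interior_Icc] at hx
    exact (hderiv x ⟨hx.1.le, hx.2.le⟩).hasDerivAt (Icc_mem_nhds hx.1 hx.2)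
  have him2 : ∀ w : ℂ, 0 < w.im → (2 / w).im < 0 := by
    intro w hw
    have h0 : w ≠ 0 := by intro h; rw [h] at hw; simp at hw
    have hn : 0 < Complex.normSq w := Complex.normSq_pos.mpr h0
    rw [Complex.div_im]
    simp only [Complex.re_ofNat, Complex.im_ofNat, zero_mul, zero_div, zero_sub, neg_neg]
    have : 0 < 2 * w.im / Complex.normSq w := by positivity
    linarith
  refine antitoneOn_of_deriv_nonpos (convex_Icc 0 T) hcontG
    (fun x hx => (hDA x hx).differentiableAt.differentiableWithinAt) ?_
  intro x hx
  rw [(hDA x hx).deriv]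
  rw [interior_Icc] at hx
  have h1 := him2 _ (him x ⟨hx.1.le, hx.2.le⟩).1
  have h2 := him2 _ (him x ⟨hx.1.le, hx.2.le⟩).2
  nlinarith
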